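/- Let M be a natural number with M ≥ 2, and let λ, L be positive reals. Then the set {d ∈ ℝ : d > 0 and sin(Mπd²/(λL)) = 0 and sin(πd²/(λL)) ≠ 0} has a least element, namely d = √(λL/M). -/

import Mathlib

/-- The threshold antenna spacing `d_threshold = √(λL/M)` is the least positive `d`
at which the adjacent-antenna array gain numerator `sin(Mπd²/(λL))` vanishes while
the denominator `sin(πd²/(λL))` does not. -/
theorem threshold_spacing_is_least (M : ℕ) (hM : 2 ≤ M) (lam L : ℝ)
    (hlam : 0 < lam) (hL : 0 < L) :
    IsLeast {d : ℝ | 0 < d ∧ Real.sin ((M : ℝ) * Real.pi * d ^ 2 / (lam * L)) = 0 ∧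
        Real.sin (Real.pi * d ^ 2 / (lam * L)) ≠ 0}
      (Real.sqrt (lam * L / M)) := by
  have hMpos : (0:ℝ) < M := by positivity
  have ht : (0:ℝ) < lam * L := by positivity
  have htM : (0:ℝ) < lam * L / M := by positivity
  have hsq : (Real.sqrt (lam * L / M)) ^ 2 = lam * L / M := Real.sq_sqrt htM.le
  constructor
  · refine ⟨Real.sqrt_pos.mpr htM, ?_, ?_⟩
    · rw [hsq]
      have : (M : ℝ) * Real.pi * (lam * L / M) / (lam * L) = Real.pi := by
        field_simp
      rw [this, Real.sin_pi]
    · rw [hsq]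
      have heq : Real.pi * (lam * L / M) / (lam * L) = Real.pi / M := by
        field_simp
      rw [heq]
      have hlt : Real.pi / M < Real.pi := by
        have : (1:ℝ) < M := by exact_mod_cast Nat.lt_of_lt_of_le one_lt_two hM
        calc Real.pi / M < Real.pi / 1 := by
              apply div_lt_div_of_pos_left Real.pi_pos one_pos this
          _ = Real.pi := by ring
      have hpos : 0 < Real.pi / M := by positivity
      exact ne_of_gt (Real.sin_pos_of_pos_of_lt_pi hpos hlt)
  · rintro d ⟨hd, hnum, _⟩
    rw [Real.sin_eq_zero_iff] at hnum
    obtain ⟨n, hn⟩ := hnum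
    have hx : (0:ℝ) < (M : ℝ) * Real.pi * d ^ 2 / (lam * L) := by positivity
    have hn0 : (0:ℝ) < n * Real.pi := hn ▸ hx
    have hn1 : (1:ℤ) ≤ n := by
      by_contra h
      push_neg at h
      have : (n:ℝ) ≤ 0 := by exact_mod_cast (by omega : n ≤ 0)
      nlinarith [Real.pi_pos]
    have hge : Real.pi ≤ (M : ℝ) * Real.pi * d ^ 2 / (lam * L) := by
      rw [← hn]
      nlinarith [Real.pi_pos, (by exact_mod_cast hn1 : (1:ℝ) ≤ n)]
    have hd2 : lam * L / M ≤ d ^ 2 := by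
      rw [div_le_iff₀ hMpos]
      rw [le_div_iff₀ ht] at hge
      nlinarith [Real.pi_pos]
    calc Real.sqrt (lam * L / M) ≤ Real.sqrt (d ^ 2) := Real.sqrt_le_sqrt hd2
      _ = d := by rw [Real.sqrt_sq hd.le]
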